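/- For every r ∈ (0, 1), set a = 1 − r²/2, s = 0, p = r². Then (a, s, −p) ∈ ℙ and (s, −p) ∈ 𝔾₂, but (0, a, p, s) ∉ 𝔽. -/

import Mathlib

/-- The operator norm of a 2×2 complex matrix, acting on the Euclidean space ℂ². -/
noncomputable def opNorm (A : Matrix (Fin 2) (Fin 2) ℂ) : ℝ :=
  ‖LinearMap.toContinuousLinearMap (Matrix.toEuclideanLin A)‖

/-- The domain 𝔽 = {(a₁₁, a₂₂, det A, a₁₂ + a₂₁) : A ∈ M₂(ℂ), ‖A‖ < 1}. -/
noncomputable def domF : Set (ℂ × ℂ × ℂ × ℂ) :=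
  {w | ∃ A : Matrix (Fin 2) (Fin 2) ℂ, opNorm A < 1 ∧
    w = (A 0 0, A 1 1, A.det, A 0 1 + A 1 0)}

/-- The symmetrized bidisc 𝔾₂. -/
def G2 : Set (ℂ × ℂ) :=
  {w | ∃ z1 z2 : ℂ, ‖z1‖ < 1 ∧ ‖z2‖ < 1 ∧ w = (z1 + z2, z1 * z2)}

/-- The pentablock ℙ = {(a₂₁, a₁₁ + a₂₂, det A) : A ∈ M₂(ℂ), ‖A‖ < 1}. -/
noncomputable def pentaP : Set (ℂ × ℂ × ℂ) :=
  {w | ∃ A : Matrix (Fin 2) (Fin 2) ℂ, opNorm A < 1 ∧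
    w = (A 1 0, A 0 0 + A 1 1, A.det)}

/-!
If `‖A‖ < 1` then every column of `A` has Euclidean length `< 1`. A matrix realising
`(0, a, p, 0) ∈ 𝔽` has `a₁₁ = 0` and `a₂₁ = -a₁₂`, so `p = det A = a₁₂²`, and its second column
gives `|p| + |a|² < 1`; for `a = 1 - r²/2`, `p = r²` this sum is `1 + r⁴/4`.

For `ℙ`, the matrix `[[x, c t], [c, -x]]` with `x² = t (1 - c²)` has `a₂₁ = c`, trace `0` and
determinant `-t`. It is `q J + R` with `J` the rotation by `π/2` and `R` a multiple of a
reflection; both satisfy `MᴴM = λ I`, so the C*-identity gives their norms, and the triangle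
inequality gives `‖A‖ ≤ c (1 - t)/2 + √(x² + (c (1 + t)/2)²)`, which is `< 1` because
`(1 - c (1 - t)/2)² - x² - (c (1 + t)/2)² = (1 - c)(1 - t)`.
-/

open scoped Matrix.Norms.L2Operator

namespace Matrix

variable {𝕜 m n : Type*} [RCLike 𝕜] [Fintype m] [Fintype n] [DecidableEq n]

lemma sum_norm_sq_col_le_l2_opNorm_sq (A : Matrix m n 𝕜) (j : n) :
    ∑ i, ‖A i j‖ ^ 2 ≤ ‖A‖ ^ 2 := by
  have h := A.l2_opNorm_mulVec (EuclideanSpace.single j 1)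
  rw [PiLp.norm_single, norm_one, mul_one, EuclideanSpace.norm_eq] at h
  simp only [EuclideanSpace.single, PiLp.ofLp_single, mulVec_single_one] at h
  rwa [Real.sqrt_le_left (norm_nonneg A)] at h

lemma l2_opNorm_eq_of_conjTranspose_mul_self_eq [Nonempty n] (A : Matrix n n 𝕜) {c : ℝ}
    (hc : 0 ≤ c) (h : Aᴴ * A = ((c ^ 2 : ℝ) : 𝕜) • 1) : ‖A‖ = c := by
  have hsq : ‖A‖ * ‖A‖ = c * c := by
    rw [← l2_opNorm_conjTranspose_mul_self, h, norm_smul, norm_one, mul_one,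
      RCLike.norm_ofReal, abs_of_nonneg (sq_nonneg c), sq]
  exact (mul_self_inj (norm_nonneg A) hc).1 hsq

lemma l2_opNorm_fin_two_rotation (q : ℝ) : ‖!![0, -(q : ℂ); q, 0]‖ = |q| := by
  refine l2_opNorm_eq_of_conjTranspose_mul_self_eq _ (abs_nonneg q) ?_
  rw [sq_abs]
  ext i j
  fin_cases i <;> fin_cases j <;> simp [Matrix.mul_apply, sq]

lemma l2_opNorm_fin_two_reflection (u w : ℝ) :
    ‖!![(u : ℂ), w; w, -u]‖ = √(u ^ 2 + w ^ 2) := by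
  refine l2_opNorm_eq_of_conjTranspose_mul_self_eq _ (Real.sqrt_nonneg _) ?_
  rw [Real.sq_sqrt (by positivity)]
  ext i j
  fin_cases i <;> fin_cases j <;> simp [Matrix.mul_apply] <;> ring

lemma l2_opNorm_fin_two_traceless_le (u b c : ℝ) :
    ‖!![(u : ℂ), b; c, -u]‖ ≤ |c - b| / 2 + √(u ^ 2 + ((b + c) / 2) ^ 2) := by
  have hsplit : !![(u : ℂ), b; c, -u] =
      !![0, -(((c - b) / 2 : ℝ) : ℂ); ((c - b) / 2 : ℝ), 0] +
        !![(u : ℂ), ((b + c) / 2 : ℝ); ((b + c) / 2 : ℝ), -u] := by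
    ext i j
    fin_cases i <;> fin_cases j <;> simp <;> ring
  calc ‖!![(u : ℂ), b; c, -u]‖
      ≤ ‖!![0, -(((c - b) / 2 : ℝ) : ℂ); ((c - b) / 2 : ℝ), 0]‖ +
          ‖!![(u : ℂ), ((b + c) / 2 : ℝ); ((b + c) / 2 : ℝ), -u]‖ := hsplit ▸ norm_add_le _ _
    _ = |c - b| / 2 + √(u ^ 2 + ((b + c) / 2) ^ 2) := by
      rw [l2_opNorm_fin_two_rotation, l2_opNorm_fin_two_reflection, abs_div, abs_two]

end Matrix

open Matrix

lemma opNorm_eq_l2_opNorm (A : Matrix (Fin 2) (Fin 2) ℂ) : opNorm A = ‖A‖ := rfl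

lemma norm_add_norm_sq_lt_one_of_mem_domF {a p : ℂ} (h : ((0 : ℂ), a, p, (0 : ℂ)) ∈ domF) :
    ‖p‖ + ‖a‖ ^ 2 < 1 := by
  obtain ⟨A, hA, heq⟩ := h
  simp only [Prod.mk.injEq] at heq
  obtain ⟨h00, h11, hdet, hsum⟩ := heq
  have hp : A 0 1 ^ 2 = p := by
    rw [det_fin_two] at hdet
    linear_combination -hdet - A 0 1 * hsum + A 1 1 * h00
  have hcol := A.sum_norm_sq_col_le_l2_opNorm_sq 1
  rw [Fin.sum_univ_two, ← h11, ← norm_pow, hp] at hcol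
  rw [opNorm_eq_l2_opNorm] at hA
  nlinarith [norm_nonneg A]

lemma ofReal_zero_neg_ofReal_mem_pentaP {c t : ℝ} (hc0 : 0 ≤ c) (hc1 : c < 1) (ht0 : 0 ≤ t)
    (ht1 : t < 1) :
    ((c : ℂ), (0 : ℂ), -(t : ℂ)) ∈ pentaP := by
  set x := √(t * (1 - c ^ 2))
  have hx : x ^ 2 = t * (1 - c ^ 2) := Real.sq_sqrt (mul_nonneg ht0 (by nlinarith))
  refine ⟨!![(x : ℂ), (c * t : ℝ); c, -x], ?_, ?_⟩
  · rw [opNorm_eq_l2_opNorm]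
    refine (l2_opNorm_fin_two_traceless_le x (c * t) c).trans_lt ?_
    have hq : |c - c * t| / 2 = c * (1 - t) / 2 := by
      rw [abs_of_nonneg (by nlinarith)]; ring
    rw [hq, ← lt_sub_iff_add_lt', Real.sqrt_lt' (by nlinarith)]
    nlinarith [mul_pos (sub_pos.2 hc1) (sub_pos.2 ht1)]
  · simp only [det_fin_two_of, of_apply, cons_val', cons_val_zero, cons_val_one, empty_val',
      cons_val_fin_one, Prod.mk.injEq, true_and]
    constructor
    · ring
    · have hxC : (x : ℂ) ^ 2 = t * (1 - c ^ 2) := by exact_mod_cast hx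
      push_cast
      linear_combination hxC

lemma zero_neg_sq_mem_G2 {z : ℂ} (hz : ‖z‖ < 1) : ((0 : ℂ), -z ^ 2) ∈ G2 :=
  ⟨z, -z, hz, by rwa [norm_neg], by simp only [add_neg_cancel, mul_neg, sq]⟩

/-- Example 2.9: for r ∈ (0,1), with a = 1 − r²/2, s = 0, p = r², one has (a, s, −p) ∈ ℙ and
(s, −p) ∈ 𝔾₂, but (0, a, p, s) ∉ 𝔽. -/
theorem stmt9 (r : ℝ) (hr0 : 0 < r) (hr1 : r < 1)
    (a s p : ℂ) (ha : a = 1 - (r : ℂ) ^ 2 / 2) (hs : s = 0) (hp : p = (r : ℂ) ^ 2) :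
    (a, s, -p) ∈ pentaP ∧ (s, -p) ∈ G2 ∧ ((0 : ℂ), a, p, s) ∉ domF := by
  have ha' : a = ((1 - r ^ 2 / 2 : ℝ) : ℂ) := by rw [ha]; push_cast; ring
  have hp' : p = ((r ^ 2 : ℝ) : ℂ) := by rw [hp]; push_cast; ring
  have hr2 : r ^ 2 < 1 := by nlinarith
  subst hs
  refine ⟨?_, hp ▸ zero_neg_sq_mem_G2 ?_, fun h => ?_⟩
  · rw [ha', hp']
    exact ofReal_zero_neg_ofReal_mem_pentaP (by nlinarith) (by nlinarith) (sq_nonneg r) hr2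
  · rwa [Complex.norm_real, Real.norm_of_nonneg hr0.le]
  · have hlt := norm_add_norm_sq_lt_one_of_mem_domF h
    rw [ha', hp', Complex.norm_real, Complex.norm_real, Real.norm_of_nonneg (sq_nonneg r),
      Real.norm_eq_abs, sq_abs] at hlt
    nlinarith [pow_two_nonneg (r ^ 2)]
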